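/- arXiv:1703.03307 — 6 statements merged into one kernel-verified Lean document; each statement's English description precedes it below -/
import Mathlib

section
/- Let I be a finite index set and suppose the tensors (A,B,C), with A^i_{j,k} = A^i_{k,j} and C^i_{j,k} = C^i_{k,j}, satisfy the relations (SymA), (BB-AC), (BC) and (BA). Set f^k_{i,j} := B^i_{j,k} − B^j_{i,k} and D_ref^i := (1/2) Σ_a B^i_{a,a}. Then: (i) the family D_ref satisfies the (D) relation; (ii) an arbitrary family D = (D^i)_{i∈I} of complex scalars satisfies the (D) relation if and only if Σ_a f^a_{i,j} (D^a − D_ref^a) = 0 for all i, j ∈ I; in particular, if f^k_{i,j} = 0 for all i,j,k, then every family D satisfies the (D) relation. -/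
section Relations

variable {I : Type*} [Fintype I]

/-- The **BB-AC** relation. -/
def RelBBAC (A B C : I → I → I → ℂ) : Prop :=
  ∀ i j k l, ∑ a, (B i j a * B a k l + B i k a * B j a l + C i l a * A j a k)
    = ∑ a, (B j i a * B a k l + B j k a * B i a l + C j l a * A i a k)

/-- The **BC** relation. -/
def RelBC (B C : I → I → I → ℂ) : Prop :=
  ∀ i j k l, ∑ a, (B i j a * C a k l + C i k a * B j a l + C i l a * B j a k)
    = ∑ a, (B j i a * C a k l + C j k a * B i a l + C j l a * B i a k)

/-- The **BA** relation. -/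
def RelBA (A B : I → I → I → ℂ) : Prop :=
  ∀ i j k l, ∑ a, (B i j a * A a k l + B i k a * A j a l + B i l a * A j a k)
    = ∑ a, (B j i a * A a k l + B j k a * A i a l + B j l a * A i a k)

/-- The **D** relation. -/
def RelD (A B C : I → I → I → ℂ) (D : I → ℂ) : Prop :=
  ∀ i j, (∑ a, B i j a * D a) + (1 / 2) * ∑ a, ∑ b, C i a b * A j a b
    = (∑ a, B j i a * D a) + (1 / 2) * ∑ a, ∑ b, C j a b * A i a b

end Relations

/-!
Contracting (BB-AC) over `k = l` gives, for every `i, j`, a quantity symmetric in `i, j`: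
`Σ_a B^i_{j,a} (Σ_b B^a_{b,b}) + tr(B^i B^j) + Σ_{a,b} C^i_{a,b} A^j_{a,b}`.
Since `tr(B^i B^j) = tr(B^j B^i)`, half of it is exactly the (D) relation for `D_ref`.
The (D) relation is affine in `D`, so once `D_ref` solves it, `D` solves it iff `D - D_ref`
solves the homogeneous relation `Σ_a f^a_{i,j} (D^a - D_ref^a) = 0`.
-/

namespace RelD

variable {I : Type*} [Fintype I] {A B C : I → I → I → ℂ}

theorem iff_of_relD {D₀ : I → ℂ} (h₀ : RelD A B C D₀) (D : I → ℂ) :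
    RelD A B C D ↔ ∀ i j, ∑ a, (B i j a - B j i a) * (D a - D₀ a) = 0 := by
  have expand : ∀ i j, ∑ a, (B i j a - B j i a) * (D a - D₀ a)
      = ((∑ a, B i j a * D a) - ∑ a, B j i a * D a)
        - ((∑ a, B i j a * D₀ a) - ∑ a, B j i a * D₀ a) := by
    intro i j
    simp only [← Finset.sum_sub_distrib]
    exact Finset.sum_congr rfl fun a _ => by ring
  refine forall₂_congr fun i j => ?_
  rw [expand]
  constructor
  · intro hD
    linear_combination hD - h₀ i j
  · intro hf
    linear_combination h₀ i j + hf

theorem sum_relBBAC_diag (hA : ∀ i j k, A i j k = A i k j) (i j : I) :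
    ∑ a, ∑ c, (B i j c * B c a a + B i a c * B j c a + C i a c * A j c a)
      = (∑ c, B i j c * ∑ b, B c b b) + Matrix.trace (Matrix.of (B i) * Matrix.of (B j))
        + ∑ a, ∑ b, C i a b * A j a b := by
  simp only [Finset.sum_add_distrib, Matrix.trace, Matrix.diag, Matrix.mul_apply,
    Matrix.of_apply, Finset.mul_sum, hA j _ _]
  rw [Finset.sum_comm (f := fun a c => B i j c * B c a a)]

theorem half_trace (hA : ∀ i j k, A i j k = A i k j) (h : RelBBAC A B C) :
    RelD A B C (fun i => (1 / 2) * ∑ a, B i a a) := by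
  intro i j
  have hdiag := Finset.sum_congr rfl fun a (_ : a ∈ Finset.univ) => h i j a a
  rw [sum_relBBAC_diag hA, sum_relBBAC_diag hA, Matrix.trace_mul_comm] at hdiag
  simp only [mul_left_comm _ (1 / 2 : ℂ), ← Finset.mul_sum]
  linear_combination (1 / 2 : ℂ) * hdiag

end RelD

theorem stmt2_general {I : Type*} [Fintype I]
    (A B C : I → I → I → ℂ)
    (hA : ∀ i j k, A i j k = A i k j)
    (h1 : RelBBAC A B C) :
    RelD A B C (fun i => (1 / 2) * ∑ a, B i a a)
    ∧ (∀ D : I → ℂ, RelD A B C D ↔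
        ∀ i j, ∑ a, (B i j a - B j i a) * (D a - (1 / 2) * ∑ b, B a b b) = 0)
    ∧ ((∀ i j k, B i j k - B j i k = 0) → ∀ D : I → ℂ, RelD A B C D) := by
  have hD₀ := RelD.half_trace hA h1
  refine ⟨hD₀, RelD.iff_of_relD hD₀, fun hf D => (RelD.iff_of_relD hD₀ D).2 ?_⟩
  intro i j
  simp [hf]

/-- If `(A,B,C)` solves the (SymA), (BB-AC), (BC) and (BA) relations, then, with
`f^k_{i,j} := B^i_{j,k} − B^j_{i,k}` and `D_ref^i := (1/2) Σ_a B^i_{a,a}`: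
(i) `D_ref` satisfies the (D) relation;
(ii) a family `D` satisfies the (D) relation iff `Σ_a f^a_{i,j}(D^a − D_ref^a) = 0` for
all `i,j`; in particular (iii) if the structure constants `f` all vanish then every `D`
satisfies the (D) relation. -/
theorem stmt2 {I : Type*} [Fintype I]
    (A B C : I → I → I → ℂ)
    (hA : ∀ i j k, A i j k = A i k j) (hC : ∀ i j k, C i j k = C i k j)
    (hSymA : ∀ i j k, A i j k = A j i k)
    (h1 : RelBBAC A B C) (h2 : RelBC B C) (h3 : RelBA A B) :
    RelD A B C (fun i => (1 / 2) * ∑ a, B i a a)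
    ∧ (∀ D : I → ℂ, RelD A B C D ↔
        ∀ i j, ∑ a, (B i j a - B j i a) * (D a - (1 / 2) * ∑ b, B a b b) = 0)
    ∧ ((∀ i j k, B i j k - B j i k = 0) → ∀ D : I → ℂ, RelD A B C D) :=
  stmt2_general A B C hA h1
end

section
/- Let I be a finite index set and for each i ∈ I let A^i, B^i, C^i be I×I complex matrices, with A^i and C^i symmetric, and write (A^i)_{j,k} = A^i_{j,k}, etc. Define the block matrix ρ_i of size (I ⊕ I) × (I ⊕ I) with top-left block −B^i, top-right block A^i, bottom-left block −C^i, and bottom-right block (B^i)^T. Set f^k_{i,j} := B^i_{j,k} − B^j_{i,k}. Then [ρ_i, ρ_j] = Σ_a f^a_{i,j} ρ_a for all i, j ∈ I if and only if the relations (BB-AC), (BC) and (BA) hold. -/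
/-- The block matrix
`ρ_i = [[−B^i, A^i], [−C^i, (B^i)ᵀ]]` acting on `ℂ^I ⊕ ℂ^I`. -/
def rhoMat {I : Type*} [Fintype I] (A B C : I → I → I → ℂ) (i : I) :
    Matrix (I ⊕ I) (I ⊕ I) ℂ :=
  Matrix.fromBlocks
    (Matrix.of fun j k => -B i j k)
    (Matrix.of fun j k => A i j k)
    (Matrix.of fun j k => -C i j k)
    (Matrix.of fun j k => B i k j)

open Matrix

section BracketDefect

variable {I : Type*} [Fintype I] (A B C : I → I → I → ℂ)

def bracketDefect (i j : I) : Matrix (I ⊕ I) (I ⊕ I) ℂ :=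
  rhoMat A B C i * rhoMat A B C j - rhoMat A B C j * rhoMat A B C i
    - ∑ a, (B i j a - B j i a) • rhoMat A B C a

variable {A B C}

lemma bracketDefect_apply (i j : I) (p q : I ⊕ I) :
    bracketDefect A B C i j p q = ∑ x, (rhoMat A B C i p x * rhoMat A B C j x q
      - rhoMat A B C j p x * rhoMat A B C i x q)
      - ∑ a, (B i j a - B j i a) * rhoMat A B C a p q := by
  simp only [bracketDefect, Matrix.sub_apply, mul_apply, Matrix.sum_apply, Matrix.smul_apply,
    smul_eq_mul, Finset.sum_sub_distrib]

lemma bracketDefect_inl_inl (hA : ∀ i j k, A i j k = A i k j)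
    (hC : ∀ i j k, C i j k = C i k j) (i j k l : I) :
    bracketDefect A B C i j (.inl k) (.inl l)
      = ∑ a, (B i j a * B a k l + B i k a * B j a l + C i l a * A j a k)
        - ∑ a, (B j i a * B a k l + B j k a * B i a l + C j l a * A i a k) := by
  simp only [bracketDefect_apply, Fintype.sum_sum_type, rhoMat, fromBlocks_apply₁₁,
    fromBlocks_apply₁₂, fromBlocks_apply₂₁, of_apply, ← Finset.sum_add_distrib,
    ← Finset.sum_sub_distrib]
  refine Finset.sum_congr rfl fun a _ => ?_
  rw [hA j a k, hA i a k, hC i l a, hC j l a]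
  ring

lemma bracketDefect_inr_inr (i j k l : I) :
    bracketDefect A B C i j (.inr k) (.inr l)
      = ∑ a, (B j i a * B a l k + B j l a * B i a k + C j k a * A i a l)
        - ∑ a, (B i j a * B a l k + B i l a * B j a k + C i k a * A j a l) := by
  simp only [bracketDefect_apply, Fintype.sum_sum_type, rhoMat, fromBlocks_apply₁₂,
    fromBlocks_apply₂₁, fromBlocks_apply₂₂, of_apply, ← Finset.sum_add_distrib,
    ← Finset.sum_sub_distrib]
  refine Finset.sum_congr rfl fun a _ => ?_
  ring

lemma bracketDefect_inr_inl (hC : ∀ i j k, C i j k = C i k j) (i j k l : I) :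
    bracketDefect A B C i j (.inr k) (.inl l)
      = ∑ a, (B i j a * C a k l + C i k a * B j a l + C i l a * B j a k)
        - ∑ a, (B j i a * C a k l + C j k a * B i a l + C j l a * B i a k) := by
  simp only [bracketDefect_apply, Fintype.sum_sum_type, rhoMat, fromBlocks_apply₁₁,
    fromBlocks_apply₂₁, fromBlocks_apply₂₂, of_apply, ← Finset.sum_add_distrib,
    ← Finset.sum_sub_distrib]
  refine Finset.sum_congr rfl fun a _ => ?_
  rw [hC i l a, hC j l a]
  ring

lemma bracketDefect_inl_inr (hA : ∀ i j k, A i j k = A i k j) (i j k l : I) :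
    bracketDefect A B C i j (.inl k) (.inr l)
      = ∑ a, (B j i a * A a k l + B j k a * A i a l + B j l a * A i a k)
        - ∑ a, (B i j a * A a k l + B i k a * A j a l + B i l a * A j a k) := by
  simp only [bracketDefect_apply, Fintype.sum_sum_type, rhoMat, fromBlocks_apply₁₁,
    fromBlocks_apply₁₂, fromBlocks_apply₂₂, of_apply, ← Finset.sum_add_distrib,
    ← Finset.sum_sub_distrib]
  refine Finset.sum_congr rfl fun a _ => ?_
  rw [hA j a k, hA i a k]
  ring

theorem forall_bracketDefect_eq_zero_iff (hA : ∀ i j k, A i j k = A i k j)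
    (hC : ∀ i j k, C i j k = C i k j) :
    (∀ i j, bracketDefect A B C i j = 0) ↔ RelBBAC A B C ∧ RelBC B C ∧ RelBA A B := by
  constructor
  · intro h
    refine ⟨fun i j k l => ?_, fun i j k l => ?_, fun i j k l => ?_⟩
    · rw [← sub_eq_zero, ← bracketDefect_inl_inl hA hC, h, Matrix.zero_apply]
    · rw [← sub_eq_zero, ← bracketDefect_inr_inl hC, h, Matrix.zero_apply]
    · rw [eq_comm, ← sub_eq_zero, ← bracketDefect_inl_inr hA, h, Matrix.zero_apply]
  · rintro ⟨hBBAC, hBC, hBA⟩ i j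
    ext (k | k) (l | l)
    · rw [bracketDefect_inl_inl hA hC, hBBAC, sub_self, Matrix.zero_apply]
    · rw [bracketDefect_inl_inr hA, hBA, sub_self, Matrix.zero_apply]
    · rw [bracketDefect_inr_inl hC, hBC, sub_self, Matrix.zero_apply]
    · rw [bracketDefect_inr_inr, hBBAC, sub_self, Matrix.zero_apply]

end BracketDefect

theorem stmt3_general {I : Type*} [Fintype I]
    (A B C : I → I → I → ℂ)
    (hA : ∀ i j k, A i j k = A i k j) (hC : ∀ i j k, C i j k = C i k j) :
    (∀ i j, rhoMat A B C i * rhoMat A B C j - rhoMat A B C j * rhoMat A B C i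
        = ∑ a, (B i j a - B j i a) • rhoMat A B C a)
      ↔ (RelBBAC A B C ∧ RelBC B C ∧ RelBA A B) := by
  simpa only [bracketDefect, sub_eq_zero] using forall_bracketDefect_eq_zero_iff hA hC

/-- With `f^k_{i,j} := B^i_{j,k} − B^j_{i,k}`, the block matrices `ρ_i` satisfy
`[ρ_i, ρ_j] = Σ_a f^a_{i,j} ρ_a` for all `i, j` if and only if the relations
(BB-AC), (BC) and (BA) hold. -/
theorem stmt3 {I : Type*} [Fintype I] [DecidableEq I]
    (A B C : I → I → I → ℂ)
    (hA : ∀ i j k, A i j k = A i k j) (hC : ∀ i j k, C i j k = C i k j) :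
    (∀ i j, rhoMat A B C i * rhoMat A B C j - rhoMat A B C j * rhoMat A B C i
        = ∑ a, (B i j a - B j i a) • rhoMat A B C a)
      ↔ (RelBBAC A B C ∧ RelBC B C ∧ RelBA A B) :=
  stmt3_general A B C hA hC
end

section
/- Let 𝔸 be a finite-dimensional commutative associative ℂ-algebra (not necessarily unital) and φ : 𝔸 → ℂ a linear form such that the bilinear form ⟨v, w⟩ := φ(vw) is nondegenerate. Let (e_i)_{i∈I} be a basis of 𝔸 and (e*_i)_{i∈I} the dual basis with respect to ⟨·,·⟩, i.e. φ(e_i e*_j) = δ_{i,j}. Fix θ_A, θ_B, θ_C ∈ 𝔸 and define A^i_{j,k} := φ(e*_i e*_j e*_k θ_A), B^i_{j,k} := φ(e*_i e*_j e_k θ_B), C^i_{j,k} := φ(e*_i e_j e_k θ_C). Then: A^i_{j,k} is fully symmetric under permutations of (i,j,k); C^i_{j,k} = C^i_{k,j}; B^i_{j,k} = B^j_{i,k} (so the structure constants f^k_{i,j} := B^i_{j,k} − B^j_{i,k} all vanish and the underlying Lie algebra is abelian); the relations (BB-AC), (BC), (BA) hold; and the (D) relation holds for every choice of scalars D^i.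 Hence (A,B,C,D) defines a quantum Airy structure for every D. -/
/-!
Because `φ (e i * e*_j) = δ_ij`, the coordinates of `x` in the basis `e` are `φ (x e*_a)`, so a
contraction over a repeated index collapses: `∑_a φ (x e*_a) φ (e_a y) = φ (x y)`. After
contracting, each side of (BB-AC), (BC), (BA) becomes `φ (e*_i e*_j Z)` with `Z` independent of
`i` and `j`, and every summand of (D) is a single value of `φ` on a product containing
`e*_i e*_j`; commutativity of `𝔸` then gives the symmetry in `i` and `j`.
-/

open Finset

namespace Module.Basis

variable {R 𝔸 I : Type*} [CommSemiring R] [NonUnitalNonAssocSemiring 𝔸] [Module R 𝔸]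
  [IsScalarTower R 𝔸 𝔸] [Fintype I] [DecidableEq I]
  {φ : 𝔸 →ₗ[R] R} {e : Basis I R 𝔸} {estar : I → 𝔸}

theorem map_mul_dual_eq_repr (hdual : ∀ i j, φ (e i * estar j) = if i = j then 1 else 0)
    (x : 𝔸) (j : I) : φ (x * estar j) = e.repr x j := by
  conv_lhs => rw [← e.sum_repr x]
  simp only [sum_mul, smul_mul_assoc, map_sum, map_smul, hdual, smul_eq_mul, mul_ite, mul_one,
    mul_zero, sum_ite_eq', mem_univ, if_true]

theorem sum_map_mul_dual_mul_map_mul (hdual : ∀ i j, φ (e i * estar j) = if i = j then 1 else 0)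
    (x y : 𝔸) : ∑ a, φ (x * estar a) * φ (e a * y) = φ (x * y) := by
  conv_rhs => rw [← e.sum_repr x]
  simp only [map_mul_dual_eq_repr hdual, sum_mul, smul_mul_assoc, map_sum, map_smul, smul_eq_mul]

end Module.Basis

section FrobeniusAiry

variable {I 𝔸 : Type*} [Fintype I] [DecidableEq I] [NonUnitalCommRing 𝔸] [Module ℂ 𝔸]
  [IsScalarTower ℂ 𝔸 𝔸]

def frobeniusA (φ : 𝔸 →ₗ[ℂ] ℂ) (estar : I → 𝔸) (θ : 𝔸) (i j k : I) : ℂ :=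
  φ (estar i * estar j * estar k * θ)

def frobeniusB (φ : 𝔸 →ₗ[ℂ] ℂ) (e estar : I → 𝔸) (θ : 𝔸) (i j k : I) : ℂ :=
  φ (estar i * estar j * e k * θ)

def frobeniusC (φ : 𝔸 →ₗ[ℂ] ℂ) (e estar : I → 𝔸) (θ : 𝔸) (i j k : I) : ℂ :=
  φ (estar i * e j * e k * θ)

variable {φ : 𝔸 →ₗ[ℂ] ℂ} {e : Module.Basis I ℂ 𝔸} {estar : I → 𝔸}
  (hdual : ∀ i j, φ (e i * estar j) = if i = j then 1 else 0) (θA θB θC : 𝔸)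

local notation "A" => frobeniusA φ estar θA
local notation "B" => frobeniusB φ e estar θB
local notation "C" => frobeniusC φ e estar θC

include hdual in
theorem sum_eq_map_mul_of_contraction {f : I → ℂ} (x y : 𝔸)
    (hf : ∀ a, f a = φ (x * e a) * φ (estar a * y)) :
    ∑ a, f a = φ (x * y) := by
  rw [mul_comm, ← e.sum_map_mul_dual_mul_map_mul hdual y x]
  exact sum_congr rfl fun a _ => by rw [hf, mul_comm, mul_comm x, mul_comm (estar a)]

include hdual in
theorem sum_frobenius_BBAC (i j k l : I) :
    ∑ a, (B i j a * B a k l + B i k a * B j a l + C i l a * A j a k)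
      = φ (estar i * estar j * (estar k * e l * (θB * θB + θB * θB + θC * θA))) := by
  simp only [sum_add_distrib, frobeniusA, frobeniusB, frobeniusC]
  rw [sum_eq_map_mul_of_contraction hdual (estar i * estar j * θB) (estar k * e l * θB)
      (fun a => by ac_rfl),
    sum_eq_map_mul_of_contraction hdual (estar i * estar k * θB) (estar j * e l * θB)
      (fun a => by ac_rfl),
    sum_eq_map_mul_of_contraction hdual (estar i * e l * θC) (estar j * estar k * θA)
      (fun a => by ac_rfl)]
  simp only [mul_add, map_add]
  congr 2 <;> ac_rfl

include hdual in
theorem relBBAC_frobenius : RelBBAC A B C := by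
  intro i j k l
  rw [sum_frobenius_BBAC hdual, sum_frobenius_BBAC hdual, mul_comm (estar i)]

include hdual in
theorem sum_frobenius_BC (i j k l : I) :
    ∑ a, (B i j a * C a k l + C i k a * B j a l + C i l a * B j a k)
      = φ (estar i * estar j * (e k * e l * (θB * θC + θC * θB + θC * θB))) := by
  simp only [sum_add_distrib, frobeniusB, frobeniusC]
  rw [sum_eq_map_mul_of_contraction hdual (estar i * estar j * θB) (e k * e l * θC)
      (fun a => by ac_rfl),
    sum_eq_map_mul_of_contraction hdual (estar i * e k * θC) (estar j * e l * θB)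
      (fun a => by ac_rfl),
    sum_eq_map_mul_of_contraction hdual (estar i * e l * θC) (estar j * e k * θB)
      (fun a => by ac_rfl)]
  simp only [mul_add, map_add]
  congr 2 <;> ac_rfl

include hdual in
theorem relBC_frobenius : RelBC B C := by
  intro i j k l
  rw [sum_frobenius_BC hdual, sum_frobenius_BC hdual, mul_comm (estar i)]

include hdual in
theorem sum_frobenius_BA (i j k l : I) :
    ∑ a, (B i j a * A a k l + B i k a * A j a l + B i l a * A j a k)
      = φ (estar i * estar j * (estar k * estar l * (θB * θA + θB * θA + θB * θA))) := by
  simp only [sum_add_distrib, frobeniusA, frobeniusB]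
  rw [sum_eq_map_mul_of_contraction hdual (estar i * estar j * θB) (estar k * estar l * θA)
      (fun a => by ac_rfl),
    sum_eq_map_mul_of_contraction hdual (estar i * estar k * θB) (estar j * estar l * θA)
      (fun a => by ac_rfl),
    sum_eq_map_mul_of_contraction hdual (estar i * estar l * θB) (estar j * estar k * θA)
      (fun a => by ac_rfl)]
  simp only [mul_add, map_add]
  congr 2 <;> ac_rfl

include hdual in
theorem relBA_frobenius : RelBA A B := by
  intro i j k l
  rw [sum_frobenius_BA hdual, sum_frobenius_BA hdual, mul_comm (estar i)]

include hdual in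
theorem sum_frobenius_CA (i j a : I) :
    ∑ b, C i a b * A j a b = φ (estar i * estar j * (e a * estar a * (θC * θA))) := by
  simp only [frobeniusA, frobeniusC]
  rw [sum_eq_map_mul_of_contraction hdual (estar i * e a * θC) (estar j * estar a * θA)
      (fun b => by ac_rfl)]
  ac_rfl

include hdual in
theorem relD_frobenius (D : I → ℂ) : RelD A B C D := by
  intro i j
  simp only [sum_frobenius_CA hdual, frobeniusB]
  rw [mul_comm (estar i)]

end FrobeniusAiry

theorem stmt11_general {I : Type*} [Fintype I] [DecidableEq I]
    {𝔸 : Type*} [NonUnitalCommRing 𝔸] [Module ℂ 𝔸]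
    [IsScalarTower ℂ 𝔸 𝔸]
    (φ : 𝔸 →ₗ[ℂ] ℂ)
    (e : Module.Basis I ℂ 𝔸) (estar : I → 𝔸)
    (hdual : ∀ i j, φ (e i * estar j) = if i = j then 1 else 0)
    (θA θB θC : 𝔸) :
    (∀ i j k, φ (estar i * estar j * estar k * θA) = φ (estar i * estar k * estar j * θA))
    ∧ (∀ i j k, φ (estar i * estar j * estar k * θA) = φ (estar j * estar i * estar k * θA))
    ∧ (∀ i j k, φ (estar i * e j * e k * θC) = φ (estar i * e k * e j * θC))
    ∧ (∀ i j k, φ (estar i * estar j * e k * θB) = φ (estar j * estar i * e k * θB))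
    ∧ RelBBAC (fun i j k => φ (estar i * estar j * estar k * θA))
        (fun i j k => φ (estar i * estar j * e k * θB))
        (fun i j k => φ (estar i * e j * e k * θC))
    ∧ RelBC (fun i j k => φ (estar i * estar j * e k * θB))
        (fun i j k => φ (estar i * e j * e k * θC))
    ∧ RelBA (fun i j k => φ (estar i * estar j * estar k * θA))
        (fun i j k => φ (estar i * estar j * e k * θB))
    ∧ (∀ D : I → ℂ,
        RelD (fun i j k => φ (estar i * estar j * estar k * θA))
          (fun i j k => φ (estar i * estar j * e k * θB))
          (fun i j k => φ (estar i * e j * e k * θC)) D) := by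
  refine ⟨fun i j k => by ac_rfl, fun i j k => by ac_rfl, fun i j k => by ac_rfl,
    fun i j k => by ac_rfl, relBBAC_frobenius hdual θA θB θC, relBC_frobenius hdual θB θC,
    relBA_frobenius hdual θA θB, fun D => relD_frobenius hdual θA θB θC D⟩

/-- Let `𝔸` be a (not necessarily unital) Frobenius algebra over `ℂ`, i.e. a
finite-dimensional commutative associative `ℂ`-algebra with a linear form `φ` whose
associated pairing `⟨v,w⟩ = φ(vw)` is nondegenerate.  Given a basis `(e_i)`, a dual
family `(e*_i)` with `φ(e_i e*_j) = δ_{ij}`, and elements `θ_A, θ_B, θ_C ∈ 𝔸`, the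
tensors `A^i_{jk} = φ(e*_i e*_j e*_k θ_A)`, `B^i_{jk} = φ(e*_i e*_j e_k θ_B)`,
`C^i_{jk} = φ(e*_i e_j e_k θ_C)` define a quantum Airy structure for every `D`:
`A` is fully symmetric, `C` is symmetric in its lower indices, `B^i_{jk} = B^j_{ik}`
(so the structure constants vanish and the Lie algebra is abelian), the relations
(BB-AC), (BC), (BA) hold, and the (D) relation holds for every choice of `D`. -/
theorem stmt11 {I : Type*} [Fintype I] [DecidableEq I]
    {𝔸 : Type*} [NonUnitalCommRing 𝔸] [Module ℂ 𝔸]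
    [SMulCommClass ℂ 𝔸 𝔸] [IsScalarTower ℂ 𝔸 𝔸] [FiniteDimensional ℂ 𝔸]
    (φ : 𝔸 →ₗ[ℂ] ℂ)
    (hnd : ∀ v : 𝔸, (∀ w : 𝔸, φ (v * w) = 0) → v = 0)
    (e : Module.Basis I ℂ 𝔸) (estar : I → 𝔸)
    (hdual : ∀ i j, φ (e i * estar j) = if i = j then 1 else 0)
    (θA θB θC : 𝔸) :
    (∀ i j k, φ (estar i * estar j * estar k * θA) = φ (estar i * estar k * estar j * θA))
    ∧ (∀ i j k, φ (estar i * estar j * estar k * θA) = φ (estar j * estar i * estar k * θA))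
    ∧ (∀ i j k, φ (estar i * e j * e k * θC) = φ (estar i * e k * e j * θC))
    ∧ (∀ i j k, φ (estar i * estar j * e k * θB) = φ (estar j * estar i * e k * θB))
    ∧ RelBBAC (fun i j k => φ (estar i * estar j * estar k * θA))
        (fun i j k => φ (estar i * estar j * e k * θB))
        (fun i j k => φ (estar i * e j * e k * θC))
    ∧ RelBC (fun i j k => φ (estar i * estar j * e k * θB))
        (fun i j k => φ (estar i * e j * e k * θC))
    ∧ RelBA (fun i j k => φ (estar i * estar j * estar k * θA))
        (fun i j k => φ (estar i * estar j * e k * θB))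
    ∧ (∀ D : I → ℂ,
        RelD (fun i j k => φ (estar i * estar j * estar k * θA))
          (fun i j k => φ (estar i * estar j * e k * θB))
          (fun i j k => φ (estar i * e j * e k * θC)) D) :=
  stmt11_general φ e estar hdual θA θB θC
end

section
/- Fix an integer r ∈ ℤ and define tensors indexed by natural numbers i, j, k ∈ ℕ: A^i_{j,k} := 1/(i+1) if i+j+k+r+2 = 0 and 0 otherwise; B^i_{j,k} := (k+1)/(i+1) if k = i+j+r and 0 otherwise; C^i_{j,k} := (j+1)(k+1)/(i+1) if i+r = j+k+2 and 0 otherwise. (All sums over a ∈ ℕ occurring in the relations have at most one nonzero term.) Then: (a) the (BC) relation holds for every r ∈ ℤ; (b) the (BB-AC) relation holds for all i, j, k, l ∈ ℕ if and only if r ≥ −1; (c) the (BA) relation holds for all i, j, k, l ∈ ℕ if and only if r ≥ −1. -/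
/-!
In each relation every summand vanishes except at a single pinned index `a`. Pulling out the
common factor `(k+1)(l+1)/((i+1)(j+1))`, `(l+1)/((i+1)(j+1))` resp. `1/((i+1)(j+1))` leaves a
natural number, a weighted count of the indices at which the tensor conditions hold, so each
relation becomes the `i ↔ j` symmetry of a piecewise linear function of `i, j, k, l, r`.
On the hyperplane where the counts live, the two orders differ by
`[i+j+r ≥ 0](j - i) + (x⁺ - (-x)⁺) + (y⁺ - (-y)⁺)` for some `x, y` with `x + y = i - j`,
that is by `([i+j+r ≥ 0] - 1)(j - i)`. For (BC), and for the other two relations when `r ≥ -1`,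
the bracket is `1` or `i = j`; for `r ≤ -2` it is `0` at `i = 0, j = 1`.
-/

/-- `A^i_{jk} = 1/(i+1)` if `i+j+k+r+2 = 0`, else `0`. -/
noncomputable def A13 (r : ℤ) (i j k : ℕ) : ℂ :=
  if (i : ℤ) + j + k + r + 2 = 0 then 1 / ((i : ℂ) + 1) else 0

/-- `B^i_{jk} = (k+1)/(i+1)` if `k = i+j+r`, else `0`. -/
noncomputable def B13 (r : ℤ) (i j k : ℕ) : ℂ :=
  if (k : ℤ) = i + j + r then ((k : ℂ) + 1) / ((i : ℂ) + 1) else 0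

/-- `C^i_{jk} = (j+1)(k+1)/(i+1)` if `i+r = j+k+2`, else `0`. -/
noncomputable def C13 (r : ℤ) (i j k : ℕ) : ℂ :=
  if (i : ℤ) + r = j + k + 2 then ((j : ℂ) + 1) * ((k : ℂ) + 1) / ((i : ℂ) + 1) else 0

theorem finsum_eq_finsum_iff_of_eq_mul_natCast {ι K : Type*} [Field K] [CharZero K]
    {T T' : ι → K} {w w' : ι → ℕ} {c : K} (hc : c ≠ 0)
    (hT : ∀ a, T a = c * w a) (hT' : ∀ a, T' a = c * w' a) :
    ∑ᶠ a, T a = ∑ᶠ a, T' a ↔ ∑ᶠ a, w a = ∑ᶠ a, w' a := by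
  have hcast (v : ι → ℕ) : ∑ᶠ a, c * (v a : K) = c * ((∑ᶠ a, v a : ℕ) : K) := by
    rw [← mul_finsum]
    exact congrArg (c * ·)
      ((Nat.castAddMonoidHom K).map_finsum_of_injective Nat.cast_injective v).symm
  simp only [hT, hT', hcast, mul_right_inj' hc, Nat.cast_inj]

theorem finsum_eq_apply_toNat {M : Type*} [AddCommMonoid M] {f : ℕ → M} (n : ℤ)
    (hf : ∀ a : ℕ, (a : ℤ) ≠ n → f a = 0) : ∑ᶠ a, f a = f n.toNat :=
  finsum_eq_single f _ fun a ha => hf a (by omega)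

theorem finsum_add_add_eq_toNat {M : Type*} [AddCommMonoid M] {f g h : ℕ → M} (nf ng nh : ℤ)
    (hf : ∀ a : ℕ, (a : ℤ) ≠ nf → f a = 0) (hg : ∀ a : ℕ, (a : ℤ) ≠ ng → g a = 0)
    (hh : ∀ a : ℕ, (a : ℤ) ≠ nh → h a = 0) :
    ∑ᶠ a, (f a + g a + h a) = f nf.toNat + g ng.toNat + h nh.toNat := by
  have hfin {u : ℕ → M} {n : ℤ} (hu : ∀ a : ℕ, (a : ℤ) ≠ n → u a = 0) :
      (Function.support u).Finite :=
    (Set.finite_singleton n.toNat).subset fun a ha =>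
      Set.mem_singleton_iff.2 <| by_contra fun hne => ha (hu a (by omega))
  rw [finsum_add_distrib ((hfin hf).union (hfin hg) |>.subset (Function.support_add _ _))
      (hfin hh), finsum_add_distrib (hfin hf) (hfin hg), finsum_eq_apply_toNat nf hf,
    finsum_eq_apply_toNat ng hg, finsum_eq_apply_toNat nh hh]

section Contractions

variable (r : ℤ) (i j k l a : ℕ)

theorem B13_comp_C13 : B13 r i j a * C13 r a k l = (k + 1) * (l + 1) / ((i + 1) * (j + 1)) *
    ((if (a : ℤ) = i + j + r ∧ (a : ℤ) + r = k + l + 2 then j + 1 else 0 : ℕ) : ℂ) := by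
  unfold B13 C13
  split_ifs <;> first | (exfalso; tauto) | (push_cast; field_simp; done) | simp

theorem C13_mul_B13 : C13 r i k a * B13 r j a l = (k + 1) * (l + 1) / ((i + 1) * (j + 1)) *
    ((if (i : ℤ) + r = k + a + 2 ∧ (l : ℤ) = j + a + r then a + 1 else 0 : ℕ) : ℂ) := by
  unfold B13 C13
  split_ifs <;> first | (exfalso; tauto) | (push_cast; field_simp; done) | simp

theorem B13_comp_B13 : B13 r i j a * B13 r a k l = (l + 1) / ((i + 1) * (j + 1)) *
    ((if (a : ℤ) = i + j + r ∧ (l : ℤ) = a + k + r then j + 1 else 0 : ℕ) : ℂ) := by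
  unfold B13
  split_ifs <;> first | (exfalso; tauto) | (push_cast; field_simp; done) | simp

theorem B13_mul_B13 : B13 r i k a * B13 r j a l = (l + 1) / ((i + 1) * (j + 1)) *
    ((if (a : ℤ) = i + k + r ∧ (l : ℤ) = j + a + r then a + 1 else 0 : ℕ) : ℂ) := by
  unfold B13
  split_ifs <;> first | (exfalso; tauto) | (push_cast; field_simp; done) | simp

theorem C13_mul_A13 : C13 r i l a * A13 r j a k = (l + 1) / ((i + 1) * (j + 1)) *
    ((if (i : ℤ) + r = l + a + 2 ∧ (j : ℤ) + a + k + r + 2 = 0 then a + 1 else 0 : ℕ) : ℂ) := by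
  unfold C13 A13
  split_ifs <;> first | (exfalso; tauto) | (push_cast; field_simp; done) | simp

theorem B13_comp_A13 : B13 r i j a * A13 r a k l = 1 / ((i + 1) * (j + 1)) *
    ((if (a : ℤ) = i + j + r ∧ (a : ℤ) + k + l + r + 2 = 0 then j + 1 else 0 : ℕ) : ℂ) := by
  unfold B13 A13
  split_ifs <;> first | (exfalso; tauto) | (push_cast; field_simp; done) | simp

theorem B13_mul_A13 : B13 r i k a * A13 r j a l = 1 / ((i + 1) * (j + 1)) *
    ((if (a : ℤ) = i + k + r ∧ (j : ℤ) + a + l + r + 2 = 0 then a + 1 else 0 : ℕ) : ℂ) := by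
  unfold B13 A13
  split_ifs <;> first | (exfalso; tauto) | (push_cast; field_simp; done) | simp

end Contractions

section Weights

variable (r : ℤ) (i j k l : ℕ)

def bcWeight (a : ℕ) : ℕ :=
  (if (a : ℤ) = i + j + r ∧ (a : ℤ) + r = k + l + 2 then j + 1 else 0)
    + (if (i : ℤ) + r = k + a + 2 ∧ (l : ℤ) = j + a + r then a + 1 else 0)
    + (if (i : ℤ) + r = l + a + 2 ∧ (k : ℤ) = j + a + r then a + 1 else 0)

def bbacWeight (a : ℕ) : ℕ :=
  (if (a : ℤ) = i + j + r ∧ (l : ℤ) = a + k + r then j + 1 else 0)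
    + (if (a : ℤ) = i + k + r ∧ (l : ℤ) = j + a + r then a + 1 else 0)
    + (if (i : ℤ) + r = l + a + 2 ∧ (j : ℤ) + a + k + r + 2 = 0 then a + 1 else 0)

def baWeight (a : ℕ) : ℕ :=
  (if (a : ℤ) = i + j + r ∧ (a : ℤ) + k + l + r + 2 = 0 then j + 1 else 0)
    + (if (a : ℤ) = i + k + r ∧ (j : ℤ) + a + l + r + 2 = 0 then a + 1 else 0)
    + (if (a : ℤ) = i + l + r ∧ (j : ℤ) + a + k + r + 2 = 0 then a + 1 else 0)

theorem finsum_bcWeight : ∑ᶠ a, bcWeight r i j k l a =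
    if (i : ℤ) + j + 2 * r = k + l + 2 then
      j + 1 + (i + r - k - 1).toNat + (i + r - l - 1).toNat else 0 := by
  unfold bcWeight
  rw [finsum_add_add_eq_toNat (i + j + r) (i + r - k - 2) (i + r - l - 2)
    (fun a ha => if_neg (by omega)) (fun a ha => if_neg (by omega)) (fun a ha => if_neg (by omega))]
  split_ifs <;> omega

theorem finsum_bbacWeight : ∑ᶠ a, bbacWeight r i j k l a =
    if (l : ℤ) = i + j + k + 2 * r then
      (if 0 ≤ (i : ℤ) + j + r then j + 1 else 0) + (i + k + r + 1).toNat + (i + r - l - 1).toNat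
    else 0 := by
  unfold bbacWeight
  rw [finsum_add_add_eq_toNat (i + j + r) (i + k + r) (i + r - l - 2)
    (fun a ha => if_neg (by omega)) (fun a ha => if_neg (by omega)) (fun a ha => if_neg (by omega))]
  split_ifs <;> omega

theorem finsum_baWeight : ∑ᶠ a, baWeight r i j k l a =
    if (i : ℤ) + j + k + l + 2 * r + 2 = 0 then
      (if 0 ≤ (i : ℤ) + j + r then j + 1 else 0) + (i + k + r + 1).toNat + (i + l + r + 1).toNat
    else 0 := by
  unfold baWeight
  rw [finsum_add_add_eq_toNat (i + j + r) (i + k + r) (i + l + r)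
    (fun a ha => if_neg (by omega)) (fun a ha => if_neg (by omega)) (fun a ha => if_neg (by omega))]
  split_ifs <;> omega

theorem finsum_bcWeight_comm : ∑ᶠ a, bcWeight r i j k l a = ∑ᶠ a, bcWeight r j i k l a := by
  rw [finsum_bcWeight, finsum_bcWeight]
  split_ifs <;> omega

end Weights

theorem finsum_bbacWeight_comm_iff (r : ℤ) :
    (∀ i j k l : ℕ, ∑ᶠ a, bbacWeight r i j k l a = ∑ᶠ a, bbacWeight r j i k l a) ↔ -1 ≤ r := by
  simp only [finsum_bbacWeight]
  refine ⟨fun h => ?_, fun hr i j k l => by split_ifs <;> omega⟩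
  by_contra hr
  have h₀ := h 0 1 (-2 * r - 1).toNat 0
  split_ifs at h₀ <;> omega

theorem finsum_baWeight_comm_iff (r : ℤ) :
    (∀ i j k l : ℕ, ∑ᶠ a, baWeight r i j k l a = ∑ᶠ a, baWeight r j i k l a) ↔ -1 ≤ r := by
  simp only [finsum_baWeight]
  refine ⟨fun h => ?_, fun hr i j k l => by split_ifs <;> omega⟩
  by_contra hr
  have h₀ := h 0 1 0 (-2 * r - 3).toNat
  split_ifs at h₀ <;> omega

section Relations

variable (r : ℤ) (i j k l : ℕ)

theorem bc_summand_eq (a : ℕ) :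
    B13 r i j a * C13 r a k l + C13 r i k a * B13 r j a l + C13 r i l a * B13 r j a k
      = (k + 1) * (l + 1) / ((i + 1) * (j + 1)) * (bcWeight r i j k l a : ℂ) := by
  rw [B13_comp_C13, C13_mul_B13, C13_mul_B13 r i j l k, bcWeight]
  push_cast
  ring

theorem bbac_summand_eq (a : ℕ) :
    B13 r i j a * B13 r a k l + B13 r i k a * B13 r j a l + C13 r i l a * A13 r j a k
      = (l + 1) / ((i + 1) * (j + 1)) * (bbacWeight r i j k l a : ℂ) := by
  rw [B13_comp_B13, B13_mul_B13, C13_mul_A13, bbacWeight]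
  push_cast
  ring

theorem ba_summand_eq (a : ℕ) :
    B13 r i j a * A13 r a k l + B13 r i k a * A13 r j a l + B13 r i l a * A13 r j a k
      = 1 / ((i + 1) * (j + 1)) * (baWeight r i j k l a : ℂ) := by
  rw [B13_comp_A13, B13_mul_A13, B13_mul_A13 r i j l k, baWeight]
  push_cast
  ring

theorem bc_relation_iff :
    ∑ᶠ a : ℕ, (B13 r i j a * C13 r a k l + C13 r i k a * B13 r j a l
        + C13 r i l a * B13 r j a k)
      = ∑ᶠ a : ℕ, (B13 r j i a * C13 r a k l + C13 r j k a * B13 r i a l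
        + C13 r j l a * B13 r i a k)
      ↔ ∑ᶠ a, bcWeight r i j k l a = ∑ᶠ a, bcWeight r j i k l a :=
  finsum_eq_finsum_iff_of_eq_mul_natCast (by simp [Nat.cast_add_one_ne_zero])
    (bc_summand_eq r i j k l)
    fun a => by rw [bc_summand_eq, mul_comm ((j : ℂ) + 1)]

theorem bbac_relation_iff :
    ∑ᶠ a : ℕ, (B13 r i j a * B13 r a k l + B13 r i k a * B13 r j a l
        + C13 r i l a * A13 r j a k)
      = ∑ᶠ a : ℕ, (B13 r j i a * B13 r a k l + B13 r j k a * B13 r i a l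
        + C13 r j l a * A13 r i a k)
      ↔ ∑ᶠ a, bbacWeight r i j k l a = ∑ᶠ a, bbacWeight r j i k l a :=
  finsum_eq_finsum_iff_of_eq_mul_natCast (by simp [Nat.cast_add_one_ne_zero])
    (bbac_summand_eq r i j k l)
    fun a => by rw [bbac_summand_eq, mul_comm ((j : ℂ) + 1)]

theorem ba_relation_iff :
    ∑ᶠ a : ℕ, (B13 r i j a * A13 r a k l + B13 r i k a * A13 r j a l
        + B13 r i l a * A13 r j a k)
      = ∑ᶠ a : ℕ, (B13 r j i a * A13 r a k l + B13 r j k a * A13 r i a l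
        + B13 r j l a * A13 r i a k)
      ↔ ∑ᶠ a, baWeight r i j k l a = ∑ᶠ a, baWeight r j i k l a :=
  finsum_eq_finsum_iff_of_eq_mul_natCast (by simp [Nat.cast_add_one_ne_zero])
    (ba_summand_eq r i j k l)
    fun a => by rw [ba_summand_eq, mul_comm ((j : ℂ) + 1)]

end Relations

/-- For the tensors coming from `ξ*_k = z^{k+1}/(k+1)`, `ξ_k = (k+1)z^{−k−2}dz` and
`θ = z^r (dz)^{−1}`:
(a) the (BC) relation holds for every `r ∈ ℤ`;
(b) the (BB-AC) relation holds if and only if `r ≥ −1`;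
(c) the (BA) relation holds if and only if `r ≥ −1`.
(All sums over `a ∈ ℕ` are finsums and have at most one nonzero term each.) -/
theorem stmt13 (r : ℤ) :
    (∀ i j k l : ℕ,
      ∑ᶠ a : ℕ, (B13 r i j a * C13 r a k l + C13 r i k a * B13 r j a l
          + C13 r i l a * B13 r j a k)
        = ∑ᶠ a : ℕ, (B13 r j i a * C13 r a k l + C13 r j k a * B13 r i a l
          + C13 r j l a * B13 r i a k))
    ∧ ((∀ i j k l : ℕ,
      ∑ᶠ a : ℕ, (B13 r i j a * B13 r a k l + B13 r i k a * B13 r j a l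
          + C13 r i l a * A13 r j a k)
        = ∑ᶠ a : ℕ, (B13 r j i a * B13 r a k l + B13 r j k a * B13 r i a l
          + C13 r j l a * A13 r i a k)) ↔ -1 ≤ r)
    ∧ ((∀ i j k l : ℕ,
      ∑ᶠ a : ℕ, (B13 r i j a * A13 r a k l + B13 r i k a * A13 r j a l
          + B13 r i l a * A13 r j a k)
        = ∑ᶠ a : ℕ, (B13 r j i a * A13 r a k l + B13 r j k a * A13 r i a l
          + B13 r j l a * A13 r i a k)) ↔ -1 ≤ r) := by
  refine ⟨fun i j k l => (bc_relation_iff r i j k l).2 (finsum_bcWeight_comm r i j k l), ?_, ?_⟩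
  · simp only [bbac_relation_iff]
    exact finsum_bbacWeight_comm_iff r
  · simp only [ba_relation_iff]
    exact finsum_baWeight_comm_iff r
end

section
/- Fix an integer r₀ ≥ −1 and t : ℤ → ℂ with t_r = 0 for all r < r₀. Define tensors indexed by ℕ: A^i_{j,k} := 0; B^i_{j,k} := (k+1)/(i+1) · t_{k−i−j}; C^i_{j,k} := (j+1)(k+1)/(i+1) · t_{j+k+2−i} (interpreting t_m = 0 for m < r₀), and let D : ℕ → ℂ. Then: (i) if D = 0 identically (as is forced by the quantum Airy structure condition when r₀ = −1), the topological recursion amplitudes are well defined (every sum occurring in the recursion has finitely many nonzero terms) and F_{g,n} = 0 for all g, n with 2g−2+n > 0; (ii) if r₀ ≥ 0 and D^k = 0 for all k > r₀, the topological recursion amplitudes are well defined and F_{g,n}(i_1, …, i_n) = 0 whenever i_1 + ⋯ + i_n > 2g − 2 + r₀(2 − n). -/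
open Finset

/-- The Kontsevich–Soibelman topological recursion amplitudes `F_{g,n}` associated to
tensors `(A,B,C,D)`.  Sums over the index type `ι` are finsums (equal to the usual finite
sums when `ι` is a `Fintype`); terms involving the unstable amplitudes `F_{0,1}` and
`F_{0,2}` are set to zero. -/
noncomputable def TRF {ι : Type*} (A B C : ι → ι → ι → ℂ) (D : ι → ℂ) :
    (g : ℕ) → (n : ℕ) → (Fin n → ι) → ℂ
  | _, 0, _ => 0
  | g, n + 1, v =>
    if g = 0 ∧ n = 2 then A (v 0) (v 1) (v 2)
    else if g = 1 ∧ n = 0 then D (v 0)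
    else if 2 * g + n < 3 then 0
    else
      (∑ m : Fin n, ∑ᶠ a : ι,
        B (v 0) (v m.succ) a *
          TRF A B C D g (({m}ᶜ : Finset (Fin n)).card + 1)
            (Fin.cons a fun j => Fin.tail v ((({m}ᶜ : Finset (Fin n)).orderIsoOfFin rfl) j).1))
      + (1 / 2) * ∑ᶠ a : ι, ∑ᶠ b : ι, C (v 0) a b *
          ((if hg : g = 0 then 0 else
              TRF A B C D (g - 1) (n + 2) (Fin.cons a (Fin.cons b (Fin.tail v))))
           + ∑ h' ∈ (Finset.range (g + 1)).attach, ∑ S : Finset (Fin n),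
               if hS : 2 * h'.1 + S.card = 0 ∨ 2 * (g - h'.1) + (Sᶜ : Finset (Fin n)).card = 0
               then 0
               else
                 TRF A B C D h'.1 (S.card + 1)
                   (Fin.cons a fun j => Fin.tail v ((S.orderIsoOfFin rfl) j).1) *
                 TRF A B C D (g - h'.1) ((Sᶜ : Finset (Fin n)).card + 1)
                   (Fin.cons b fun j => Fin.tail v (((Sᶜ : Finset (Fin n)).orderIsoOfFin rfl) j).1))
  termination_by g n _ => 2 * g + n
  decreasing_by
  all_goals
    first
    | (have h1 := m.isLt
       have h2 : ({m}ᶜ : Finset (Fin n)).card = n - 1 := by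
         simp [Finset.card_compl]
       omega)
    | omega
    | (have h1 : h'.1 ≤ g := by
         have := h'.2
         simp only [Finset.mem_range] at this
         omega
       have h2 : S.card ≤ n := le_trans (Finset.card_le_univ S) (by simp)
       have h3 : (Sᶜ : Finset (Fin n)).card = n - S.card := by
         simp [Finset.card_compl]
       omega)

/-- `B^i_{jk} = (k+1)/(i+1) · t_{k−i−j}`. -/
noncomputable def B16 (t : ℤ → ℂ) (i j k : ℕ) : ℂ :=
  ((k : ℂ) + 1) / ((i : ℂ) + 1) * t ((k : ℤ) - i - j)

/-- `C^i_{jk} = (j+1)(k+1)/(i+1) · t_{j+k+2−i}`. -/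
noncomputable def C16 (t : ℤ → ℂ) (i j k : ℕ) : ℂ :=
  ((j : ℂ) + 1) * ((k : ℂ) + 1) / ((i : ℂ) + 1) * t ((j : ℤ) + k + 2 - i)

/-!
Every term of the recursion for `F_{g,n+1}(v)` carries a factor `B^{v₀}_{v_m,a}` or
`C^{v₀}_{a,b}`, and the support conditions on `B` and `C` turn a lower bound on the weight
`Σ vᵢ` into a lower bound on the weights of the arguments of the lower amplitudes. By induction
on `2g + n` the bound `Σ vᵢ > 2g − 2 + r₀(2 − n)` is therefore inherited: exactly in the `B`-term
and in the splitting `C`-term, with a margin of `2r₀` in the genus-reducing `C`-term, which is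
why `r₀ ≥ 0` is needed. The bound also excludes every argument of the base cases `F_{0,3} = 0`
and `F_{1,1} = D`, so all amplitudes of large weight vanish, and for fixed `(g, n)` only
finitely many arguments remain. When `D = 0` the same induction, without any weight, kills
every amplitude.
-/

namespace TRF

variable {ι : Type*} {A B C : ι → ι → ι → ℂ} {D : ι → ℂ}

/-- The argument `(a, (v_{i+1})_{i ∈ S})` of the amplitudes in the recursion for `F_{g,n+1}(v)`. -/
def consRestrict {n : ℕ} (a : ι) (v : Fin (n + 1) → ι) (S : Finset (Fin n)) :
    Fin (S.card + 1) → ι :=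
  Fin.cons a fun j => Fin.tail v ((S.orderIsoOfFin rfl) j).1

theorem nil_eq_zero (g : ℕ) (v : Fin 0 → ι) : TRF A B C D g 0 v = 0 := by
  rw [TRF]

theorem succ_eq_zero_of_terms {g n : ℕ} {v : Fin (n + 1) → ι}
    (hA : g = 0 → n = 2 → A (v 0) (v 1) (v 2) = 0)
    (hD : g = 1 → n = 0 → D (v 0) = 0)
    (hB : ∀ m a, B (v 0) (v m.succ) a ≠ 0 →
      TRF A B C D g (({m}ᶜ : Finset (Fin n)).card + 1) (consRestrict a v {m}ᶜ) = 0)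
    (hC : ∀ a b, C (v 0) a b ≠ 0 →
      (g ≠ 0 → TRF A B C D (g - 1) (n + 2) (Fin.cons a (Fin.cons b (Fin.tail v))) = 0) ∧
      ∀ h ≤ g, ∀ S : Finset (Fin n), 2 * h + S.card ≠ 0 → 2 * (g - h) + Sᶜ.card ≠ 0 →
        TRF A B C D h (S.card + 1) (consRestrict a v S) *
          TRF A B C D (g - h) (Sᶜ.card + 1) (consRestrict b v Sᶜ) = 0) :
    TRF A B C D g (n + 1) v = 0 := by
  rw [TRF]
  split
  next h03 => exact hA h03.1 h03.2
  split
  next h11 => exact hD h11.1 h11.2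
  split
  next => rfl
  have hBterm : ∀ m a, B (v 0) (v m.succ) a *
      TRF A B C D g (({m}ᶜ : Finset (Fin n)).card + 1) (consRestrict a v {m}ᶜ) = 0 := by
    intro m a
    by_cases hBma : B (v 0) (v m.succ) a = 0
    · rw [hBma, zero_mul]
    · rw [hB m a hBma, mul_zero]
  have hCterm : ∀ a b, C (v 0) a b *
      ((if hg : g = 0 then 0 else
          TRF A B C D (g - 1) (n + 2) (Fin.cons a (Fin.cons b (Fin.tail v))))
        + ∑ h ∈ (range (g + 1)).attach, ∑ S : Finset (Fin n),
          if hS : 2 * h.1 + S.card = 0 ∨ 2 * (g - h.1) + Sᶜ.card = 0 then 0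
          else TRF A B C D h.1 (S.card + 1) (consRestrict a v S) *
            TRF A B C D (g - h.1) (Sᶜ.card + 1) (consRestrict b v Sᶜ)) = 0 := by
    intro a b
    by_cases hCab : C (v 0) a b = 0
    · rw [hCab, zero_mul]
    obtain ⟨hgenus, hsplit⟩ := hC a b hCab
    refine mul_eq_zero_of_right _ ?_
    rw [dite_eq_ite, ite_eq_left_iff.mpr hgenus, zero_add]
    refine sum_eq_zero fun h _ => sum_eq_zero fun S _ => ?_
    rw [dite_eq_left_iff, not_or]
    exact fun hS => hsplit h.1 (Nat.lt_succ_iff.mp (mem_range.mp h.2)) S hS.1 hS.2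
  exact (congrArg₂ (· + 1 / 2 * ·)
    (sum_eq_zero fun m _ => finsum_eq_zero_of_forall_eq_zero (hBterm m))
    (finsum_eq_zero_of_forall_eq_zero fun a => finsum_eq_zero_of_forall_eq_zero (hCterm a))).trans
    (by ring)

theorem sum_consRestrict {M : Type*} [AddCommMonoid M] (f : ι → M) {n : ℕ} (a : ι)
    (v : Fin (n + 1) → ι) (S : Finset (Fin n)) :
    ∑ j, f (consRestrict a v S j) = f a + ∑ i ∈ S, f (v i.succ) := by
  rw [Fin.sum_univ_succ, ← sum_coe_sort S]
  exact congrArg (f a + ·) (Fintype.sum_equiv (S.orderIsoOfFin rfl).toEquiv _ _ fun _ => rfl)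

theorem eq_zero_of_A_D_eq_zero (g n : ℕ) (v : Fin n → ι) :
    TRF (fun _ _ _ => 0) B C (fun _ => 0) g n v = 0 := by
  induction hN : 2 * g + n using Nat.strong_induction_on generalizing g n with
  | _ N ih =>
  subst hN
  cases n with
  | zero => exact nil_eq_zero g v
  | succ n =>
  replace ih g' n' v' (hlt : 2 * g' + n' < 2 * g + (n + 1)) := ih _ hlt g' n' v' rfl
  refine succ_eq_zero_of_terms (fun _ _ => rfl) (fun _ _ => rfl) (fun m a _ => ih _ _ _ ?_)
    (fun a b _ => ⟨fun hg => ih _ _ _ ?_, fun h hh S hS hSc => ?_⟩)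
  · have := card_add_card_compl {m}
    simp only [card_singleton, Fintype.card_fin] at this
    omega
  · omega
  · have := card_add_card_compl S
    rw [Fintype.card_fin] at this
    rw [ih _ _ _ (by omega : 2 * h + (S.card + 1) < _), zero_mul]

end TRF

theorem TRF.eq_zero_of_lt_sum {r0 : ℤ} {B C : ℕ → ℕ → ℕ → ℂ} {D : ℕ → ℂ} (hr0 : 0 ≤ r0)
    (hB : ∀ i j k : ℕ, (k : ℤ) < i + j + r0 → B i j k = 0)
    (hC : ∀ i j k : ℕ, (j : ℤ) + k + 2 < i + r0 → C i j k = 0)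
    (hD : ∀ k : ℕ, r0 < k → D k = 0) (g n : ℕ) (v : Fin n → ℕ)
    (hv : 2 * (g : ℤ) - 2 + r0 * (2 - (n : ℤ)) < ∑ m, ((v m : ℕ) : ℤ)) :
    TRF (fun _ _ _ => 0) B C D g n v = 0 := by
  induction hN : 2 * g + n using Nat.strong_induction_on generalizing g n with
  | _ N ih =>
  subst hN
  cases n with
  | zero => exact nil_eq_zero g v
  | succ n =>
  replace ih g' n' v' hv' (hlt : 2 * g' + n' < 2 * g + (n + 1)) := ih _ hlt g' n' v' hv' rfl
  rw [Fin.sum_univ_succ] at hv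
  push_cast at hv
  have hsum (S : Finset (Fin n)) := sum_add_sum_compl S fun i => ((v i.succ : ℕ) : ℤ)
  have hcard (S : Finset (Fin n)) : S.card + Sᶜ.card = n := by
    rw [card_add_card_compl, Fintype.card_fin]
  refine succ_eq_zero_of_terms (fun _ _ => rfl) (fun hg hn => ?_) (fun m a hBa => ?_)
    (fun a b hCab => ⟨fun hg => ?_, fun h hh S hS hSc => ?_⟩)
  · subst hg hn
    refine hD _ ?_
    simp only [Finset.univ_eq_empty, sum_empty] at hv
    push_cast at hv
    linarith
  · have ha : (v 0 : ℤ) + v m.succ + r0 ≤ a := by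
      by_contra! h
      exact hBa (hB _ _ _ h)
    have hm := hcard {m}
    have hsm := hsum {m}
    rw [card_singleton] at hm
    rw [sum_singleton] at hsm
    refine ih g _ _ ?_ (by omega)
    rw [sum_consRestrict (fun k : ℕ => (k : ℤ))]
    push_cast
    rw [show (({m}ᶜ : Finset (Fin n)).card : ℤ) = n - 1 by omega]
    linarith
  · have hab : (v 0 : ℤ) ≤ a + b + 2 - r0 := by
      by_contra! h
      exact hCab (hC _ _ _ (by linarith))
    refine ih (g - 1) (n + 2) _ ?_ (by omega)
    simp only [Fin.sum_univ_succ, Fin.cons_zero, Fin.cons_succ, Fin.tail]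
    push_cast [Nat.one_le_iff_ne_zero.mpr hg]
    linarith
  · have hab : (v 0 : ℤ) ≤ a + b + 2 - r0 := by
      by_contra! h
      exact hCab (hC _ _ _ (by linarith))
    have hc := hcard S
    have hs := hsum S
    by_cases hfirst : 2 * (h : ℤ) - 2 + r0 * (2 - ((S.card + 1 : ℕ) : ℤ)) <
        ∑ j, ((consRestrict a v S j : ℕ) : ℤ)
    · rw [ih _ _ _ hfirst (by omega), zero_mul]
    · refine mul_eq_zero_of_right _ (ih (g - h) _ _ ?_ (by omega))
      rw [sum_consRestrict (fun k : ℕ => (k : ℤ))] at hfirst ⊢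
      push_cast at hfirst ⊢
      rw [Nat.cast_sub hh, show (Sᶜ.card : ℤ) = n - S.card by omega]
      linarith

theorem B16_eq_zero {r0 : ℤ} {t : ℤ → ℂ} (ht : ∀ r, r < r0 → t r = 0) (i j k : ℕ)
    (hk : (k : ℤ) < i + j + r0) : B16 t i j k = 0 := by
  rw [B16, ht _ (by linarith), mul_zero]

theorem C16_eq_zero {r0 : ℤ} {t : ℤ → ℂ} (ht : ∀ r, r < r0 → t r = 0) (i j k : ℕ)
    (hjk : (j : ℤ) + k + 2 < i + r0) : C16 t i j k = 0 := by
  rw [C16, ht _ (by linarith), mul_zero]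

theorem Function.finite_support_of_eq_zero_of_lt_sum {ι M : Type*} [Fintype ι] [DecidableEq ι]
    [Zero M] {f : (ι → ℕ) → M} (K : ℤ) (hf : ∀ v, K < ∑ i, ((v i : ℕ) : ℤ) → f v = 0) :
    f.support.Finite := by
  refine (Set.finite_Iic fun _ => K.toNat).subset fun v hv i => ?_
  by_contra! hvi
  refine hv (hf v ?_)
  calc K ≤ K.toNat := Int.self_le_toNat K
    _ < v i := by exact_mod_cast hvi
    _ ≤ ∑ i, ((v i : ℕ) : ℤ) := single_le_sum (fun _ _ => Int.natCast_nonneg _) (mem_univ i)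

theorem stmt16_general (r0 : ℤ) (t : ℤ → ℂ) (ht : ∀ r : ℤ, r < r0 → t r = 0) :
    ((∀ g n : ℕ, 1 ≤ n → 2 < 2 * g + n →
        (Function.support
          (TRF (fun _ _ _ => (0 : ℂ)) (B16 t) (C16 t) (fun _ => (0 : ℂ)) g n)).Finite
        ∧ ∀ v : Fin n → ℕ,
            TRF (fun _ _ _ => (0 : ℂ)) (B16 t) (C16 t) (fun _ => (0 : ℂ)) g n v = 0))
    ∧ (0 ≤ r0 → ∀ D : ℕ → ℂ, (∀ k : ℕ, r0 < (k : ℤ) → D k = 0) →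
        ∀ g n : ℕ, 1 ≤ n → 2 < 2 * g + n →
          (Function.support (TRF (fun _ _ _ => (0 : ℂ)) (B16 t) (C16 t) D g n)).Finite
          ∧ ∀ v : Fin n → ℕ,
              2 * (g : ℤ) - 2 + r0 * (2 - (n : ℤ)) < ∑ m : Fin n, ((v m : ℕ) : ℤ) →
              TRF (fun _ _ _ => (0 : ℂ)) (B16 t) (C16 t) D g n v = 0) := by
  refine ⟨fun g n _ _ => ?_, fun hr0 D hD g n _ _ => ?_⟩
  · have hzero := TRF.eq_zero_of_A_D_eq_zero (B := B16 t) (C := C16 t) g n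
    rw [Function.support_eq_empty_iff.mpr (funext hzero)]
    exact ⟨Set.finite_empty, hzero⟩
  · have hvanish := TRF.eq_zero_of_lt_sum hr0 (B16_eq_zero ht) (C16_eq_zero ht) hD g n
    exact ⟨Function.finite_support_of_eq_zero_of_lt_sum _ hvanish, hvanish⟩

/-- Vanishing of the amplitudes of the loop-space quantum Airy structure with
`θ(z) = Σ_{r ≥ r₀} t_r z^r (dz)^{−1}`, `A = 0`:
(i) if `D = 0` the amplitudes are well defined (for each `(g,n)` only finitely many are
nonzero) and all vanish;
(ii) if `r₀ ≥ 0` and `D^k = 0` for `k > r₀`, the amplitudes are well defined and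
`F_{g,n}(i₁,…,iₙ) = 0` whenever `i₁ + ⋯ + iₙ > 2g − 2 + r₀(2 − n)`. -/
theorem stmt16 (r0 : ℤ) (hr0 : -1 ≤ r0) (t : ℤ → ℂ) (ht : ∀ r : ℤ, r < r0 → t r = 0) :
    ((∀ g n : ℕ, 1 ≤ n → 2 < 2 * g + n →
        (Function.support
          (TRF (fun _ _ _ => (0 : ℂ)) (B16 t) (C16 t) (fun _ => (0 : ℂ)) g n)).Finite
        ∧ ∀ v : Fin n → ℕ,
            TRF (fun _ _ _ => (0 : ℂ)) (B16 t) (C16 t) (fun _ => (0 : ℂ)) g n v = 0))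
    ∧ (0 ≤ r0 → ∀ D : ℕ → ℂ, (∀ k : ℕ, r0 < (k : ℤ) → D k = 0) →
        ∀ g n : ℕ, 1 ≤ n → 2 < 2 * g + n →
          (Function.support (TRF (fun _ _ _ => (0 : ℂ)) (B16 t) (C16 t) D g n)).Finite
          ∧ ∀ v : Fin n → ℕ,
              2 * (g : ℤ) - 2 + r0 * (2 - (n : ℤ)) < ∑ m : Fin n, ((v m : ℕ) : ℤ) →
              TRF (fun _ _ _ => (0 : ℂ)) (B16 t) (C16 t) D g n v = 0) :=
  stmt16_general r0 t ht
end

section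
/- Let t : ℤ → ℂ satisfy t_s = 0 for all s < −1. Define tensors indexed by ℕ: A^i_{j,k} := t_{−1} if i = j = k = 0 and 0 otherwise; B^i_{j,k} := (2k+1)/(2i+1) · t_{k−i−j}; C^i_{j,k} := (2j+1)(2k+1)/(2i+1) · t_{j+k+1−i} (interpreting t_m = 0 for m < −1), and let D : ℕ → ℂ satisfy D^i = 0 for all i ≥ 2. Then the topological recursion amplitudes are well defined (every sum occurring in the recursion has only finitely many nonzero terms) and F_{g,n}(i_1, …, i_n) = 0 whenever i_1 + ⋯ + i_n > 3g − 3 + n. -/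
open Finset

/-- `A^i_{jk} = t_{−1}` if `i = j = k = 0`, else `0`. -/
noncomputable def A17 (t : ℤ → ℂ) (i j k : ℕ) : ℂ :=
  if i = 0 ∧ j = 0 ∧ k = 0 then t (-1) else 0

/-- `B^i_{jk} = (2k+1)/(2i+1) · t_{k−i−j}`. -/
noncomputable def B17 (t : ℤ → ℂ) (i j k : ℕ) : ℂ :=
  (2 * (k : ℂ) + 1) / (2 * (i : ℂ) + 1) * t ((k : ℤ) - i - j)

/-- `C^i_{jk} = (2j+1)(2k+1)/(2i+1) · t_{j+k+1−i}`. -/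
noncomputable def C17 (t : ℤ → ℂ) (i j k : ℕ) : ℂ :=
  (2 * (j : ℂ) + 1) * (2 * (k : ℂ) + 1) / (2 * (i : ℂ) + 1) * t ((j : ℤ) + k + 1 - i)

/-!
Each term of the recursion for `F_{g,n}` is a coefficient of `B` or `C` times amplitudes of
smaller `2g - 2 + n`. Since `t_s = 0` for `s < -1`, `B^{i₁}_{i_m,a}` vanishes unless
`a ≥ i₁ + i_m - 1` and `C^{i₁}_{a,b}` unless `a + b ≥ i₁ - 2`; these losses of total degree are
exactly the drops of `3g - 3 + n` from `F_{g,n}` to `F_{g,n-1}`, to `F_{g-1,n+1}` and to the sum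
of the bounds of the two factors `F_{h',·} F_{g-h',·}`. So the bound propagates by strong
induction on `2g + n`, and it leaves only finitely many nonzero amplitudes.
-/

theorem Fin.sum_cons_orderIsoOfFin {M : Type*} [AddCommMonoid M] {n : ℕ} (S : Finset (Fin n))
    (a : M) (w : Fin n → M) :
    ∑ j, (Fin.cons a fun j => w (S.orderIsoOfFin rfl j).1 : Fin (S.card + 1) → M) j =
      a + ∑ x ∈ S, w x := by
  rw [Fin.sum_cons, ← sum_coe_sort S w]
  exact congrArg (a + ·) ((S.orderIsoOfFin rfl).toEquiv.sum_comp fun x => w x)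

/-- `F g n v = 0` whenever `∑ v > 3g - 3 + n`, with the `3` moved across to avoid truncated
subtraction. -/
def VanishesAboveDim (F : (g n : ℕ) → (Fin n → ℕ) → ℂ) (g n : ℕ) : Prop :=
  ∀ v : Fin n → ℕ, 3 * g + n < ∑ m, v m + 3 → F g n v = 0

theorem VanishesAboveDim.support_finite {F : (g n : ℕ) → (Fin n → ℕ) → ℂ} {g n : ℕ}
    (hF : VanishesAboveDim F g n) : (Function.support (F g n)).Finite := by
  refine (Set.finite_Iic fun _ => 3 * g + n).subset fun v hv m => ?_
  show v m ≤ 3 * g + n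
  by_contra hm
  have hvm : v m ≤ ∑ i, v i := single_le_sum (fun i _ => Nat.zero_le (v i)) (mem_univ m)
  exact hv (hF v (by omega))

section Grading

variable {A B C : ℕ → ℕ → ℕ → ℂ} {D : ℕ → ℂ} {g n : ℕ} {v : Fin (n + 1) → ℕ}

theorem TRF_B_term_eq_zero (hB : ∀ i j a, a + 1 < i + j → B i j a = 0)
    (hv : 3 * g + (n + 1) < ∑ m, v m + 3)
    (ih : ∀ g' k, 2 * g' + k < 2 * g + (n + 1) → VanishesAboveDim (TRF A B C D) g' k)
    (m : Fin n) :
    ∑ᶠ a, B (v 0) (v m.succ) a * TRF A B C D g (({m}ᶜ : Finset (Fin n)).card + 1)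
      (Fin.cons a fun j => Fin.tail v ((({m}ᶜ : Finset (Fin n)).orderIsoOfFin rfl) j).1) = 0 := by
  refine finsum_eq_zero_of_forall_eq_zero fun a => ?_
  by_cases ha : a + 1 < v 0 + v m.succ
  · rw [hB _ _ _ ha, zero_mul]
  have hcard : ({m}ᶜ : Finset (Fin n)).card + 1 = n := by
    rw [← card_singleton m, card_compl_add_card, Fintype.card_fin]
  have htail : ∑ i ∈ {m}ᶜ, Fin.tail v i + v m.succ = ∑ i : Fin n, v i.succ := by
    rw [← sum_compl_add_sum {m}, sum_singleton]; rfl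
  rw [Fin.sum_univ_succ] at hv
  refine mul_eq_zero_of_right _ (ih _ _ (by omega) _ ?_)
  rw [Fin.sum_cons_orderIsoOfFin]
  omega

/-- The two dimension bounds add up to `3g - 5 + n`, which `a + b + ∑ v_{≥1}` exceeds, so one
factor vanishes. -/
theorem TRF_mul_TRF_eq_zero_of_split (hv : 3 * g + (n + 1) < ∑ m, v m + 3)
    (ih : ∀ g' k, 2 * g' + k < 2 * g + (n + 1) → VanishesAboveDim (TRF A B C D) g' k)
    {a b : ℕ} (hab : v 0 ≤ a + b + 2) {h : ℕ} (hh : h ≤ g) (S : Finset (Fin n))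
    (hS : ¬(2 * h + S.card = 0 ∨ 2 * (g - h) + Sᶜ.card = 0)) :
    TRF A B C D h (S.card + 1) (Fin.cons a fun j => Fin.tail v ((S.orderIsoOfFin rfl) j).1) *
      TRF A B C D (g - h) (Sᶜ.card + 1)
        (Fin.cons b fun j => Fin.tail v ((Sᶜ.orderIsoOfFin rfl) j).1) = 0 := by
  have htail : ∑ x ∈ S, Fin.tail v x + ∑ x ∈ Sᶜ, Fin.tail v x = ∑ i : Fin n, v i.succ :=
    sum_add_sum_compl _ _
  have hcard : S.card + Sᶜ.card = n := by rw [card_add_card_compl, Fintype.card_fin]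
  rw [Fin.sum_univ_succ] at hv
  by_cases hleft : 3 * h + (S.card + 1) < a + ∑ x ∈ S, Fin.tail v x + 3
  · exact mul_eq_zero_of_left (ih _ _ (by omega) _ (by rwa [Fin.sum_cons_orderIsoOfFin])) _
  · exact mul_eq_zero_of_right _
      (ih _ _ (by omega) _ (by rw [Fin.sum_cons_orderIsoOfFin]; omega))

theorem TRF_succ_eq_zero (hA : ∀ i j k, 0 < i + j + k → A i j k = 0)
    (hB : ∀ i j a, a + 1 < i + j → B i j a = 0) (hC : ∀ i a b, a + b + 2 < i → C i a b = 0)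
    (hD : ∀ i, 1 < i → D i = 0) (hv : 3 * g + (n + 1) < ∑ m, v m + 3)
    (ih : ∀ g' k, 2 * g' + k < 2 * g + (n + 1) → VanishesAboveDim (TRF A B C D) g' k) :
    TRF A B C D g (n + 1) v = 0 := by
  rw [TRF]
  split
  next h03 =>
    obtain ⟨rfl, rfl⟩ := h03
    rw [Fin.sum_univ_three] at hv
    exact hA _ _ _ (by omega)
  split
  next h11 =>
    obtain ⟨rfl, rfl⟩ := h11
    rw [Fin.sum_univ_one] at hv
    exact hD _ (by omega)
  split
  next => rfl
  rw [sum_eq_zero fun m _ => TRF_B_term_eq_zero hB hv ih m, zero_add]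
  refine mul_eq_zero_of_right _ (finsum_eq_zero_of_forall_eq_zero fun a =>
    finsum_eq_zero_of_forall_eq_zero fun b => ?_)
  by_cases hab : a + b + 2 < v 0
  · rw [hC _ _ _ hab, zero_mul]
  have hgenus (hg : g ≠ 0) :
      TRF A B C D (g - 1) (n + 2) (Fin.cons a (Fin.cons b (Fin.tail v))) = 0 := by
    refine ih _ _ (by omega) _ ?_
    rw [Fin.sum_univ_succ] at hv
    rw [Fin.sum_cons, Fin.sum_cons]
    change _ < a + (b + ∑ i : Fin n, v i.succ) + 3
    omega
  rw [dite_eq_left_iff.mpr hgenus, zero_add]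
  refine mul_eq_zero_of_right _ (sum_eq_zero fun (h : range (g + 1)) _ =>
    sum_eq_zero fun S _ => dite_eq_left_iff.mpr fun hS => ?_)
  exact TRF_mul_TRF_eq_zero_of_split hv ih (not_lt.mp hab)
    (Nat.lt_succ_iff.mp (mem_range.mp h.2)) S hS

end Grading

theorem vanishesAboveDim_TRF {A B C : ℕ → ℕ → ℕ → ℂ} {D : ℕ → ℂ}
    (hA : ∀ i j k, 0 < i + j + k → A i j k = 0) (hB : ∀ i j a, a + 1 < i + j → B i j a = 0)
    (hC : ∀ i a b, a + b + 2 < i → C i a b = 0) (hD : ∀ i, 1 < i → D i = 0) (g n : ℕ) :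
    VanishesAboveDim (TRF A B C D) g n := by
  induction hN : 2 * g + n using Nat.strong_induction_on generalizing g n with
  | _ N ih =>
    subst hN
    rcases n with _ | n
    · intro v _
      rw [TRF]
    · exact fun v hv => TRF_succ_eq_zero hA hB hC hD hv fun g' k hk => ih _ hk g' k rfl

theorem A17_eq_zero (t : ℤ → ℂ) {i j k : ℕ} (h : 0 < i + j + k) : A17 t i j k = 0 :=
  if_neg (by omega)

theorem B17_eq_zero {t : ℤ → ℂ} (ht : ∀ s : ℤ, s < -1 → t s = 0) {i j a : ℕ}
    (h : a + 1 < i + j) : B17 t i j a = 0 := by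
  rw [B17, ht _ (by omega), mul_zero]

theorem C17_eq_zero {t : ℤ → ℂ} (ht : ∀ s : ℤ, s < -1 → t s = 0) {i a b : ℕ}
    (h : a + b + 2 < i) : C17 t i a b = 0 := by
  rw [C17, ht _ (by omega), mul_zero]

/-- Dimension bound for the `ℤ₂`-invariant loop-space quantum Airy structure with
`θ(z) = Σ_{s≥−1} t_s z^{2s} (dz)^{−1}` and `D` vanishing in degrees `≥ 2`:
the amplitudes are well defined (for each `(g,n)` only finitely many are nonzero), and
`F_{g,n}(i₁,…,iₙ) = 0` whenever `i₁ + ⋯ + iₙ > 3g − 3 + n`. -/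
theorem stmt17 (t : ℤ → ℂ) (ht : ∀ s : ℤ, s < -1 → t s = 0)
    (D : ℕ → ℂ) (hD : ∀ i : ℕ, 2 ≤ i → D i = 0) :
    ∀ g n : ℕ, 1 ≤ n → 2 < 2 * g + n →
      (Function.support (TRF (A17 t) (B17 t) (C17 t) D g n)).Finite
      ∧ ∀ v : Fin n → ℕ,
          3 * (g : ℤ) - 3 + (n : ℤ) < ∑ m : Fin n, ((v m : ℕ) : ℤ) →
          TRF (A17 t) (B17 t) (C17 t) D g n v = 0 := by
  intro g n _ _
  have hF : VanishesAboveDim (TRF (A17 t) (B17 t) (C17 t) D) g n :=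
    vanishesAboveDim_TRF (fun _ _ _ => A17_eq_zero t) (fun _ _ _ => B17_eq_zero ht)
      (fun _ _ _ => C17_eq_zero ht) hD g n
  refine ⟨hF.support_finite, fun v hv => hF v ?_⟩
  rw [← Nat.cast_sum] at hv
  omega
end
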